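/- Let φ be an F-voltage function on a graph Γ' and let f: Γ → Γ' be a morphism of graphs. Then the pullback f^*(Γ' ×_φ F, p, Γ') is equivalent to the F-graph bundle (Γ ×_{f^*φ} F, q, Γ), where q(v,x) = v for each (v,x) ∈ V_Γ × V_F; an equivalence is given by the map Φ: f^*(Γ' ×_φ F) → Γ ×_{f^*φ} F defined by Φ(v,(f(v),w)) = (v,w). -/

import Mathlib

open Classical Matrix Kronecker

universe u

noncomputable section

/-- A morphism of graphs: adjacent vertices are mapped to adjacent or equal vertices. -/
def IsGraphMorphism {V W : Type*} (G : SimpleGraph V) (H : SimpleGraph W) (f : V → W) : Prop :=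
  ∀ ⦃a b : V⦄, G.Adj a b → H.Adj (f a) (f b) ∨ f a = f b

/-- The graph `X̃` obtained from `X` by deleting the edges lying inside fibers of `p`. -/
def delFiberEdges {VX VB : Type*} (X : SimpleGraph VX) (p : VX → VB) : SimpleGraph VX where
  Adj a b := X.Adj a b ∧ p a ≠ p b
  symm.symm := by
    intro a b h
    exact ⟨h.1.symm, Ne.symm h.2⟩
  loopless.irrefl := by
    intro a h
    exact X.loopless.irrefl a h.1

/-- `(X, p, B)` is an `F`-graph bundle. -/
structure IsGraphBundle {VF VX VB : Type*} (F : SimpleGraph VF) (X : SimpleGraph VX)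
    (p : VX → VB) (B : SimpleGraph VB) : Prop where
  morphism : IsGraphMorphism X B p
  surj : Function.Surjective p
  fiber_iso : ∀ v : VB, Nonempty ((X.induce (p ⁻¹' {v})) ≃g F)
  fiber_card : ∀ v : VB, Nat.card (p ⁻¹' {v}) = Nat.card VF
  covering : ∀ x : VX,
    Set.BijOn p ((delFiberEdges X p).neighborSet x) (B.neighborSet (p x))
  transport : ∀ ⦃v w : VB⦄, B.Adj v w →
    ∃ ψ : (X.induce (p ⁻¹' {v})) ≃g (X.induce (p ⁻¹' {w})),
      ∀ x : (p ⁻¹' {v}), X.Adj x.1 (ψ x).1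

/-- Vertices of the pullback graph. -/
abbrev PullbackVert {VB VX VC : Type*} (f : VB → VC) (p : VX → VC) :=
  {a : VB × VX // f a.1 = p a.2}

/-- The total space of the pullback of the bundle `(X, p, C)` along `f : B → C`. -/
def pullbackGraph {VB VX VC : Type*} (B : SimpleGraph VB) (X : SimpleGraph VX)
    (f : VB → VC) (p : VX → VC) (C : SimpleGraph VC) :
    SimpleGraph (PullbackVert f p) where
  Adj a b :=
    (a.1.1 = b.1.1 ∧ X.Adj a.1.2 b.1.2) ∨
    (B.Adj a.1.1 b.1.1 ∧ f a.1.1 = f b.1.1 ∧ a.1.2 = b.1.2) ∨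
    (B.Adj a.1.1 b.1.1 ∧ C.Adj (f a.1.1) (f b.1.1) ∧ X.Adj a.1.2 b.1.2)
  symm.symm := by
    rintro a b (⟨h1, h2⟩ | ⟨h1, h2, h3⟩ | ⟨h1, h2, h3⟩)
    · exact Or.inl ⟨h1.symm, h2.symm⟩
    · exact Or.inr (Or.inl ⟨h1.symm, h2.symm, h3.symm⟩)
    · exact Or.inr (Or.inr ⟨h1.symm, h2.symm, h3.symm⟩)
  loopless.irrefl := by
    rintro a (⟨_, h⟩ | ⟨h, _⟩ | ⟨h, _⟩)
    · exact X.loopless.irrefl _ h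
    · exact B.loopless.irrefl _ h
    · exact B.loopless.irrefl _ h

/-- The projection of the pullback bundle. -/
def pullbackProj {VB VX VC : Type*} (f : VB → VC) (p : VX → VC) :
    PullbackVert f p → VB := fun a => a.1.1

/-- Two graph bundles over the same base are equivalent. -/
def BundlesEquiv {VX VY VB : Type*} (X : SimpleGraph VX) (p : VX → VB)
    (Y : SimpleGraph VY) (q : VY → VB) : Prop :=
  ∃ Φ : X ≃g Y, ∀ x, q (Φ x) = p x

/-- A graph bundle is trivial if it is equivalent to `(B □ F, π, B)` with `π (v, f) = v`. -/
def IsTrivialBundle {VF VX VB : Type*} (F : SimpleGraph VF) (X : SimpleGraph VX)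
    (p : VX → VB) (B : SimpleGraph VB) : Prop :=
  ∃ Φ : X ≃g (B.boxProd F), ∀ x, (Φ x).1 = p x

/-- An `F`-voltage function on `B`. -/
structure VoltageFunction {VB VF : Type*} (B : SimpleGraph VB) (F : SimpleGraph VF) where
  volt : VB → VB → (F ≃g F)
  volt_symm : ∀ v w, volt w v = (volt v w).symm

/-- The graph `B ×_φ F` associated with a voltage function. -/
def voltageGraph {VB VF : Type*} (B : SimpleGraph VB) (F : SimpleGraph VF)
    (φ : VoltageFunction B F) : SimpleGraph (VB × VF) where
  Adj a b := (B.Adj a.1 b.1 ∧ b.2 = φ.volt a.1 b.1 a.2) ∨ (a.1 = b.1 ∧ F.Adj a.2 b.2)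
  symm.symm := by
    rintro a b (⟨h1, h2⟩ | ⟨h1, h2⟩)
    · refine Or.inl ⟨h1.symm, ?_⟩
      rw [φ.volt_symm, h2, RelIso.symm_apply_apply]
    · exact Or.inr ⟨h1.symm, h2.symm⟩
  loopless.irrefl := by
    rintro a (⟨h, _⟩ | ⟨_, h⟩)
    · exact B.loopless.irrefl _ h
    · exact F.loopless.irrefl _ h

/-- The pullback of a voltage function along a graph morphism. -/
def pullbackVoltage {VB VC VF : Type*} (B : SimpleGraph VB) (C : SimpleGraph VC)
    (F : SimpleGraph VF) (f : VB → VC) (φ : VoltageFunction C F) : VoltageFunction B F where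
  volt v w := if f v = f w then RelIso.refl _ else φ.volt (f v) (f w)
  volt_symm v w := by
    try dsimp only
    by_cases h : f v = f w
    · rw [if_pos h, if_pos h.symm]
      rfl
    · rw [if_neg h, if_neg (fun hh : f w = f v => h hh.symm), φ.volt_symm]
/-- Adjacency matrix (over `ℝ`). -/
def adjMat {V : Type*} (G : SimpleGraph V) : Matrix V V ℝ :=
  Matrix.of fun a b => if G.Adj a b then 1 else 0

/-- Permutation matrix of an automorphism of `F`. -/
def permMat {VF : Type*} {F : SimpleGraph VF} (ψ : F ≃g F) : Matrix VF VF ℝ :=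
  Matrix.of fun a b => if b = ψ a then 1 else 0

/-- The matrix `M_f` of a map of vertex sets. -/
def morMat {VB VC : Type*} (f : VB → VC) : Matrix VC VB ℝ :=
  Matrix.of fun c b => if f b = c then 1 else 0

/-- The matrix `A_B(ψ)` of a voltage function. -/
def voltMat {VB VF : Type*} {B : SimpleGraph VB} {F : SimpleGraph VF}
    (φ : VoltageFunction B F) (ψ : F ≃g F) : Matrix VB VB ℝ :=
  Matrix.of fun v w => if B.Adj v w ∧ φ.volt v w = ψ then 1 else 0

instance instFiniteGraphIso {VF : Type*} [Finite VF] (F : SimpleGraph VF) :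
    Finite (F ≃g F) :=
  Finite.of_injective (fun ψ => (ψ.toEquiv : VF ≃ VF)) (fun a b h => by
    cases a; cases b; simpa using h)

noncomputable instance instFintypeGraphIso {VF : Type*} [Finite VF] (F : SimpleGraph VF) :
    Fintype (F ≃g F) :=
  Fintype.ofFinite _

/-- The image graph `f(Γ)` of a graph morphism. -/
def imageGraph {VB VC : Type*} (B : SimpleGraph VB) (f : VB → VC) :
    SimpleGraph (Set.range f) where
  Adj a b := a.1 ≠ b.1 ∧ ∃ v w, B.Adj v w ∧ f v = a.1 ∧ f w = b.1
  symm.symm := by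
    rintro a b ⟨hne, v, w, h, hv, hw⟩
    exact ⟨hne.symm, w, v, h.symm, hw, hv⟩
  loopless.irrefl := by
    rintro a ⟨hne, -⟩
    exact hne rfl

/-- The Cayley graph of a group with respect to a set of generators. -/
def cayleyGraph {G : Type*} [Group G] (S : Set G) : SimpleGraph G :=
  SimpleGraph.fromRel (fun x y => ∃ s ∈ S, y = x * s)

/-- The subdirect product of two groups with amalgamated factor group `B`. -/
def subdirSubgroup {A₁ A₂ B : Type*} [Group A₁] [Group A₂] [Group B]
    (φ₁ : A₁ →* B) (φ₂ : A₂ →* B) : Subgroup (A₁ × A₂) where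
  carrier := {a : A₁ × A₂ | φ₁ a.1 = φ₂ a.2}
  one_mem' := by simp
  mul_mem' := by
    intro a b ha hb
    simp only [Set.mem_setOf_eq, Prod.fst_mul, Prod.snd_mul, _root_.map_mul] at *
    rw [ha, hb]
  inv_mem' := by
    intro a ha
    simp only [Set.mem_setOf_eq, Prod.fst_inv, Prod.snd_inv, _root_.map_inv] at *
    rw [ha]


/-!
Over a base vertex `v`, the fibre of the pullback consists of the pairs `(v, (f v, w))`, so forgetting
the middle coordinate identifies its vertices with `V_Γ × V_F`. Adjacency matches case by case: over
a single base vertex both sides are copies of `F`; along an edge `v ∼ w` with `f v = f w` the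
pullback joins equal points and `f^*φ(v, w)` is the identity; along an edge with `f v ≠ f w`, which
`f` maps to an edge of `Γ'`, both sides join `x` to `φ(f v, f w) x`.
-/

section VoltageGraph

variable {VB VF : Type*} {B : SimpleGraph VB} {F : SimpleGraph VF}

lemma voltageGraph_adj_fiber (φ : VoltageFunction B F) (v : VB) (x y : VF) :
    (voltageGraph B F φ).Adj (v, x) (v, y) ↔ F.Adj x y := by
  simp only [voltageGraph, SimpleGraph.irrefl, false_and, true_and, false_or]

lemma voltageGraph_adj_of_fst_adj (φ : VoltageFunction B F) {a b : VB × VF}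
    (h : B.Adj a.1 b.1) : (voltageGraph B F φ).Adj a b ↔ b.2 = φ.volt a.1 b.1 a.2 := by
  simp only [voltageGraph, h, h.ne, true_and, false_and, or_false]

lemma voltageGraph_not_adj (φ : VoltageFunction B F) {a b : VB × VF} (hne : a.1 ≠ b.1)
    (hadj : ¬B.Adj a.1 b.1) : ¬(voltageGraph B F φ).Adj a b := by
  simp only [voltageGraph, hne, hadj, false_and, or_self, not_false_eq_true]

end VoltageGraph

section Pullback

variable {VB VC VF : Type*} {B : SimpleGraph VB} {C : SimpleGraph VC} {F : SimpleGraph VF}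

lemma pullbackVoltage_volt_of_eq (φ : VoltageFunction C F) {f : VB → VC} {v w : VB}
    (h : f v = f w) : (pullbackVoltage B C F f φ).volt v w = RelIso.refl _ :=
  if_pos h

lemma pullbackVoltage_volt_of_ne (φ : VoltageFunction C F) {f : VB → VC} {v w : VB}
    (h : f v ≠ f w) : (pullbackVoltage B C F f φ).volt v w = φ.volt (f v) (f w) :=
  if_neg h

variable {VX : Type*} {X : SimpleGraph VX} {f : VB → VC} {p : VX → VC}

lemma pullbackGraph_adj_of_base_eq {a b : PullbackVert f p} (h : a.1.1 = b.1.1) :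
    (pullbackGraph B X f p C).Adj a b ↔ X.Adj a.1.2 b.1.2 := by
  simp only [pullbackGraph, h, SimpleGraph.irrefl, false_and, true_and, or_false]

lemma pullbackGraph_adj_of_base_adj {a b : PullbackVert f p} (h : B.Adj a.1.1 b.1.1) :
    (pullbackGraph B X f p C).Adj a b ↔
      (f a.1.1 = f b.1.1 ∧ a.1.2 = b.1.2) ∨ (C.Adj (f a.1.1) (f b.1.1) ∧ X.Adj a.1.2 b.1.2) := by
  simp only [pullbackGraph, h, h.ne, true_and, false_and, false_or]

lemma pullbackGraph_not_adj {a b : PullbackVert f p} (hne : a.1.1 ≠ b.1.1)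
    (hadj : ¬B.Adj a.1.1 b.1.1) : ¬(pullbackGraph B X f p C).Adj a b := by
  simp only [pullbackGraph, hne, hadj, false_and, or_self, not_false_eq_true]

variable (f) in
def pullbackFstEquiv : PullbackVert f (Prod.fst : VC × VF → VC) ≃ VB × VF where
  toFun a := (a.1.1, a.1.2.2)
  invFun x := ⟨(x.1, (f x.1, x.2)), rfl⟩
  left_inv a := Subtype.ext (Prod.ext rfl (Prod.ext a.2 rfl))
  right_inv _ := rfl

lemma pullbackGraph_voltageGraph_adj_iff (φ : VoltageFunction C F) (hf : IsGraphMorphism B C f)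
    (a b : VB × VF) :
    (pullbackGraph B (voltageGraph C F φ) f Prod.fst C).Adj
        ((pullbackFstEquiv f).symm a) ((pullbackFstEquiv f).symm b) ↔
      (voltageGraph B F (pullbackVoltage B C F f φ)).Adj a b := by
  obtain ⟨v, x⟩ := a
  obtain ⟨w, y⟩ := b
  by_cases hvw : v = w
  · subst hvw
    exact (pullbackGraph_adj_of_base_eq (by rfl)).trans <|
      (voltageGraph_adj_fiber φ _ x y).trans (voltageGraph_adj_fiber _ v x y).symm
  by_cases hB : B.Adj v w
  · refine (pullbackGraph_adj_of_base_adj hB).trans <|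
      Iff.trans ?_ (voltageGraph_adj_of_fst_adj _ hB).symm
    by_cases hfvw : f v = f w
    · simp [pullbackFstEquiv, pullbackVoltage_volt_of_eq φ hfvw, hfvw, eq_comm]
    · have hC : C.Adj (f v) (f w) := (hf hB).resolve_right hfvw
      simpa [pullbackFstEquiv, pullbackVoltage_volt_of_ne φ hfvw, hfvw, hC] using
        voltageGraph_adj_of_fst_adj φ (a := (f v, x)) (b := (f w, y)) hC
  · exact iff_of_false (pullbackGraph_not_adj hvw hB) (voltageGraph_not_adj _ hvw hB)

def pullbackVoltageGraphIso (φ : VoltageFunction C F) (hf : IsGraphMorphism B C f) :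
    pullbackGraph B (voltageGraph C F φ) f Prod.fst C ≃g
      voltageGraph B F (pullbackVoltage B C F f φ) :=
  RelIso.symm ⟨(pullbackFstEquiv f).symm, pullbackGraph_voltageGraph_adj_iff φ hf _ _⟩

end Pullback

theorem pullback_voltage_bundle_equiv_general
    {VB VC VF : Type*}
    (B : SimpleGraph VB) (C : SimpleGraph VC) (F : SimpleGraph VF)
    (φ : VoltageFunction C F) (f : VB → VC) (hf : IsGraphMorphism B C f) :
    ∃ Φ : (pullbackGraph B (voltageGraph C F φ) f Prod.fst C) ≃g
          (voltageGraph B F (pullbackVoltage B C F f φ)),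
      (∀ a, (Φ a).1 = pullbackProj f Prod.fst a) ∧
      (∀ a, Φ a = (a.1.1, a.1.2.2)) :=
  ⟨pullbackVoltageGraphIso φ hf, fun _ => rfl, fun _ => rfl⟩

/-- the pullback of a voltage-function bundle is equivalent to the bundle of
the pulled-back voltage function, via `Φ (v, (f v, w)) = (v, w)`. -/
theorem pullback_voltage_bundle_equiv
    {VB VC VF : Type*} [Fintype VB] [Fintype VC] [Fintype VF]
    (B : SimpleGraph VB) (C : SimpleGraph VC) (F : SimpleGraph VF)
    (φ : VoltageFunction C F) (f : VB → VC) (hf : IsGraphMorphism B C f) :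
    ∃ Φ : (pullbackGraph B (voltageGraph C F φ) f Prod.fst C) ≃g
          (voltageGraph B F (pullbackVoltage B C F f φ)),
      (∀ a, (Φ a).1 = pullbackProj f Prod.fst a) ∧
      (∀ a, Φ a = (a.1.1, a.1.2.2)) :=
  pullback_voltage_bundle_equiv_general B C F φ f hf
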